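/- Let π = μ_W ∘ (μ_S|S̃(E))⁻¹ : S(E) → W(E). Let I_L^{(S)} ⊆ S(E) be the ideal generated by the image of L under μ_S, and let I_L ⊆ W(E) be the left ideal generated by μ_W(L). Then π(I_L^{(S)}) = I_L. -/

import Mathlib

/-!
Context: `A` a commutative ring, `lam ∈ A`, `E` a finite free `A`-module with basis
`e : Fin (ν+ν') → E` (first `ν` vectors spanning `L`, last `ν'` spanning `L'`, both
isotropic for `ω`).  `W(E)` and `S(E)` are `RingQuot`s of `T(E)` with projections
`μ_W`, `μ_S`; `S̃(E)` is the span of the nonincreasing tensor monomials `e_I`, the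
restriction `μ_S|S̃(E)` is an isomorphism (hypothesis `hS`), and
`π = μ_W ∘ (μ_S|S̃(E))⁻¹ : S(E) → W(E)`.
-/

/-- The defining relation of the Weyl algebra `W(E)`. -/
def weylRel (A : Type*) [CommRing A] {E : Type*} [AddCommGroup E] [Module A E]
    (lam : A) (ω : E →ₗ[A] E →ₗ[A] A) :
    TensorAlgebra A E → TensorAlgebra A E → Prop := fun a b =>
  ∃ x y : E, a = TensorAlgebra.ι A x * TensorAlgebra.ι A y ∧
    b = TensorAlgebra.ι A y * TensorAlgebra.ι A x +
      algebraMap A (TensorAlgebra A E) (lam * ω x y)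

/-- The defining relation of the symmetric algebra `S(E)`. -/
def symRel (A : Type*) [CommRing A] (E : Type*) [AddCommGroup E] [Module A E] :
    TensorAlgebra A E → TensorAlgebra A E → Prop := fun a b =>
  ∃ x y : E, a = TensorAlgebra.ι A x * TensorAlgebra.ι A y ∧
    b = TensorAlgebra.ι A y * TensorAlgebra.ι A x

/-- `e_I = e_{i₁} ⊗ ⋯ ⊗ e_{i_p} ∈ T(E)` for a list of indices `I` (with `e_∅ = 1`). -/
noncomputable def eTensor {A : Type*} [CommRing A] {E : Type*} [AddCommGroup E]
    [Module A E] {n : ℕ} (e : Module.Basis (Fin n) A E) (I : List (Fin n)) : TensorAlgebra A E :=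
  (I.map fun i => TensorAlgebra.ι A (e i)).prod

/-- `S̃(E)`: the `A`-submodule of `T(E)` spanned by the tensors `e_I` over all
nonincreasing sequences `I`. -/
noncomputable def stilde {A : Type*} [CommRing A] {E : Type*} [AddCommGroup E]
    [Module A E] {n : ℕ} (e : Module.Basis (Fin n) A E) : Submodule A (TensorAlgebra A E) :=
  Submodule.span A {t | ∃ I : List (Fin n), List.Pairwise (· ≥ ·) I ∧ t = eTensor e I}

/-!
In `S(E)` and in `W(E)` the images `v i` of the basis vectors satisfy
`v k * v j = v j * v k + c k j` with scalars `c k j` vanishing when `e k, e j ∈ L`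
(`c = 0` in `S(E)`, `c k j = λ ω(e k, e j)` in `W(E)`). Since the indices of `L` are the
smallest ones, a nonincreasing monomial containing an `L`-index ends with an element of `L`,
so it lies in the left ideal generated by `L`. Conversely, straightening `v k * v_J` produces
nonincreasing monomials, and a commutator term can only drop a non-`L` index, so the span of
these monomials is a left ideal. Hence in both algebras the ideal equals the span of the
nonincreasing monomials meeting `L`, and `π` sends each such monomial of `S(E)` to the same
monomial of `W(E)`.
-/

section SortedSpan

variable (A : Type*) [CommRing A] {R : Type*} [Ring R] [Algebra A R]
  {ι : Type*} [LinearOrder ι]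

def sortedSpan (v : ι → R) (P : List ι → Prop) : Submodule A R :=
  Submodule.span A {x | ∃ K : List ι, K.Pairwise (· ≥ ·) ∧ P K ∧ x = (K.map v).prod}

variable {A} (v : ι → R)

lemma prod_mem_sortedSpan {P : List ι → Prop} {K : List ι} (hK : K.Pairwise (· ≥ ·))
    (hP : P K) : (K.map v).prod ∈ sortedSpan A v P :=
  Submodule.subset_span ⟨K, hK, hP, rfl⟩

lemma sortedSpan_mono {P Q : List ι → Prop} (h : ∀ K, P K → Q K) :
    sortedSpan A v P ≤ sortedSpan A v Q :=
  Submodule.span_mono fun _ ⟨K, hK, hP, hx⟩ => ⟨K, hK, h K hP, hx⟩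

lemma sortedSpan_le_comap_mulLeft {P Q : List ι → Prop} (j : ι)
    (h : ∀ K, K.Pairwise (· ≥ ·) → P K → (∀ a ∈ K, j ≥ a) ∧ Q (j :: K)) :
    sortedSpan A v P ≤ (sortedSpan A v Q).comap (LinearMap.mulLeft A (v j)) := by
  refine Submodule.span_le.mpr ?_
  rintro _ ⟨K, hK, hP, rfl⟩
  obtain ⟨hjK, hQ⟩ := h K hK hP
  simpa using prod_mem_sortedSpan v (List.pairwise_cons.mpr ⟨hjK, hK⟩) hQ

lemma map_sortedSpan {S : Type*} [Ring S] [Algebra A S] (w : ι → S) (f : R →ₗ[A] S)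
    (hf : ∀ K : List ι, K.Pairwise (· ≥ ·) → f (K.map v).prod = (K.map w).prod)
    (P : List ι → Prop) : (sortedSpan A v P).map f = sortedSpan A w P := by
  rw [sortedSpan, sortedSpan, Submodule.map_span]
  congr 1
  ext x
  constructor
  · rintro ⟨_, ⟨K, hK, hP, rfl⟩, rfl⟩
    exact ⟨K, hK, hP, hf K hK⟩
  · rintro ⟨K, hK, hP, rfl⟩
    exact ⟨_, ⟨K, hK, hP, rfl⟩, hf K hK⟩

variable {v} {s : Set ι} {c : ι → ι → A}
  (hcomm : ∀ k j, v k * v j = v j * v k + algebraMap A R (c k j))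
  (hs : IsLowerSet s) (hc : ∀ k ∈ s, ∀ j ∈ s, c k j = 0)
include hcomm hs hc

theorem mul_prod_mem_sortedSpan {J : List ι} (hJ : J.Pairwise (· ≥ ·)) (k : ι) :
    v k * (J.map v).prod ∈
      sortedSpan A v fun K => K ⊆ k :: J ∧ ((∃ j ∈ J, j ∈ s) → ∃ j ∈ K, j ∈ s) := by
  induction J with
  | nil => simpa using prod_mem_sortedSpan (A := A) v (K := [k]) (by simp) (by simp)
  | cons j J ih =>
    obtain ⟨hjJ, hJ⟩ := List.pairwise_cons.mp hJ
    rcases le_or_gt j k with hjk | hkj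
    · have hsorted : (k :: j :: J).Pairwise (· ≥ ·) :=
        List.pairwise_cons.mpr ⟨by simpa using ⟨hjk, fun a ha => (hjJ a ha).trans hjk⟩, hJ.cons hjJ⟩
      exact prod_mem_sortedSpan v hsorted
        ⟨List.Subset.refl _, fun ⟨a, ha, has⟩ => ⟨a, List.mem_cons_of_mem _ ha, has⟩⟩
    · have hswap : v k * ((j :: J).map v).prod =
          v j * (v k * (J.map v).prod) + c k j • (J.map v).prod := by
        rw [List.map_cons, List.prod_cons, ← mul_assoc, hcomm, add_mul, mul_assoc,
          Algebra.smul_def]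
      rw [hswap]
      refine add_mem (sortedSpan_le_comap_mulLeft v j ?_ (ih hJ)) ?_
      · rintro K - ⟨hKsub, hKs⟩
        refine ⟨fun a ha => ?_, fun a ha => ?_, fun ⟨a, ha, has⟩ => ?_⟩
        · rcases List.mem_cons.mp (hKsub ha) with rfl | ha
          exacts [hkj.le, hjJ a ha]
        · rcases List.mem_cons.mp ha with rfl | ha
          exacts [List.mem_cons_of_mem _ List.mem_cons_self,
            List.cons_subset_cons k (List.subset_cons_self j J) (hKsub ha)]
        · rcases List.mem_cons.mp ha with rfl | ha
          exacts [⟨a, List.mem_cons_self, has⟩,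
            (hKs ⟨a, ha, has⟩).imp fun b ⟨hb, hbs⟩ => ⟨List.mem_cons_of_mem _ hb, hbs⟩]
      · by_cases hj : j ∈ s
        · simp [hc k (hs hkj.le hj) j hj]
        · refine Submodule.smul_mem _ _ (prod_mem_sortedSpan v hJ
            ⟨List.subset_cons_of_subset _ (List.subset_cons_self _ _), fun ⟨a, ha, has⟩ => ?_⟩)
          rcases List.mem_cons.mp ha with rfl | ha
          exacts [absurd has hj, ⟨a, ha, has⟩]

theorem mul_mem_sortedSpan (hgen : Algebra.adjoin A (Set.range v) = ⊤) (w : R) {x : R}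
    (hx : x ∈ sortedSpan A v fun K => ∃ j ∈ K, j ∈ s) :
    w * x ∈ sortedSpan A v fun K => ∃ j ∈ K, j ∈ s := by
  have hw : w ∈ Algebra.adjoin A (Set.range v) := hgen ▸ Algebra.mem_top
  induction hw using Algebra.adjoin_induction generalizing x with
  | mem _ hk =>
    obtain ⟨k, rfl⟩ := hk
    refine (Submodule.span_le.mpr ?_ :
      _ ≤ (sortedSpan A v _).comap (LinearMap.mulLeft A (v k))) hx
    rintro _ ⟨K, hK, hKs, rfl⟩
    exact sortedSpan_mono v (fun _ h => h.2 hKs) (mul_prod_mem_sortedSpan hcomm hs hc hK k)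
  | algebraMap a => simpa [← Algebra.smul_def] using Submodule.smul_mem _ a hx
  | add _ _ _ _ h₁ h₂ => simpa [add_mul] using add_mem (h₁ hx) (h₂ hx)
  | mul _ _ _ _ h₁ h₂ => simpa [mul_assoc] using h₁ (h₂ hx)

theorem ideal_span_eq_sortedSpan (hgen : Algebra.adjoin A (Set.range v) = ⊤) :
    (Ideal.span (v '' s)).restrictScalars A = sortedSpan A v fun K => ∃ j ∈ K, j ∈ s := by
  apply le_antisymm
  · intro x hx
    induction hx using Submodule.span_induction with
    | mem _ hx =>
      obtain ⟨i, hi, rfl⟩ := hx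
      simpa using prod_mem_sortedSpan (A := A) v (K := [i]) (by simp) ⟨i, by simp, hi⟩
    | zero => exact zero_mem _
    | add _ _ _ _ h₁ h₂ => exact add_mem h₁ h₂
    | smul w _ _ h => exact mul_mem_sortedSpan hcomm hs hc hgen w h
  · refine Submodule.span_le.mpr ?_
    rintro _ ⟨K, hK, ⟨j, hjK, hj⟩, rfl⟩
    obtain ⟨K', l, rfl⟩ := K.eq_nil_or_concat'.resolve_left (List.ne_nil_of_mem hjK)
    -- the last factor of a nonincreasing monomial carries its smallest index
    have hlj : l ≤ j := by
      rcases List.mem_append.mp hjK with hjK' | hjl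
      · exact (List.pairwise_append.mp hK).2.2 j hjK' l (List.mem_singleton_self l)
      · exact (List.mem_singleton.mp hjl).ge
    have hl : v l ∈ Ideal.span (v '' s) := Ideal.subset_span ⟨l, hs hlj hj, rfl⟩
    simpa using Ideal.mul_mem_left _ (K'.map v).prod hl

end SortedSpan

lemma Ideal.span_image_span {A R M : Type*} [CommRing A] [Ring R] [Algebra A R]
    [AddCommGroup M] [Module A M] (f : M →ₗ[A] R) (t : Set M) :
    Ideal.span (f '' Submodule.span A t) = Ideal.span (f '' t) := by
  rw [← Submodule.map_coe, Submodule.map_span]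
  exact Submodule.span_span_of_tower A R _

section RingQuotTensorAlgebra

variable {A : Type*} [CommRing A] {E : Type*} [AddCommGroup E] [Module A E]
  (r : TensorAlgebra A E → TensorAlgebra A E → Prop)

lemma mkAlgHom_eTensor {n : ℕ} (e : Module.Basis (Fin n) A E) (K : List (Fin n)) :
    RingQuot.mkAlgHom A r (eTensor e K) =
      (K.map fun i => RingQuot.mkAlgHom A r (TensorAlgebra.ι A (e i))).prod := by
  simp [eTensor, map_list_prod, List.map_map, Function.comp_def]

lemma adjoin_range_mkAlgHom_ι_basis {κ : Type*} (e : Module.Basis κ A E) :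
    Algebra.adjoin A (Set.range fun i => RingQuot.mkAlgHom A r (TensorAlgebra.ι A (e i))) = ⊤ := by
  have hT : Algebra.adjoin A (TensorAlgebra.ι A '' Set.range e) = ⊤ := by
    rw [← Algebra.adjoin_span, ← Submodule.map_span, e.span_eq, Submodule.map_top,
      LinearMap.coe_range, TensorAlgebra.adjoin_range_ι]
  have hrange : (Set.range fun i => RingQuot.mkAlgHom A r (TensorAlgebra.ι A (e i))) =
      RingQuot.mkAlgHom A r '' (TensorAlgebra.ι A '' Set.range e) := by
    rw [Set.image_image, ← Set.range_comp]
    rfl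
  rw [hrange, Algebra.adjoin_image, hT, Algebra.map_top, AlgHom.range_eq_top]
  exact RingQuot.mkAlgHom_surjective A r

lemma ideal_span_mkAlgHom_ι_span (t : Set E) :
    Ideal.span (RingQuot.mkAlgHom A r '' (TensorAlgebra.ι A '' Submodule.span A t)) =
      Ideal.span ((fun x => RingQuot.mkAlgHom A r (TensorAlgebra.ι A x)) '' t) := by
  rw [Set.image_image]
  exact Ideal.span_image_span ((RingQuot.mkAlgHom A r).toLinearMap ∘ₗ TensorAlgebra.ι A) t

lemma mkAlgHom_symRel_ι_comm (x y : E) :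
    RingQuot.mkAlgHom A (symRel A E) (TensorAlgebra.ι A x) *
        RingQuot.mkAlgHom A (symRel A E) (TensorAlgebra.ι A y) =
      RingQuot.mkAlgHom A (symRel A E) (TensorAlgebra.ι A y) *
        RingQuot.mkAlgHom A (symRel A E) (TensorAlgebra.ι A x) := by
  simpa only [map_mul] using RingQuot.mkAlgHom_rel A (s := symRel A E) ⟨x, y, rfl, rfl⟩

lemma mkAlgHom_weylRel_ι_comm (lam : A) (ω : E →ₗ[A] E →ₗ[A] A) (x y : E) :
    RingQuot.mkAlgHom A (weylRel A lam ω) (TensorAlgebra.ι A x) *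
        RingQuot.mkAlgHom A (weylRel A lam ω) (TensorAlgebra.ι A y) =
      RingQuot.mkAlgHom A (weylRel A lam ω) (TensorAlgebra.ι A y) *
          RingQuot.mkAlgHom A (weylRel A lam ω) (TensorAlgebra.ι A x) +
        algebraMap A _ (lam * ω x y) := by
  simpa only [map_mul, map_add, AlgHom.commutes] using
    RingQuot.mkAlgHom_rel A (s := weylRel A lam ω) ⟨x, y, rfl, rfl⟩

end RingQuotTensorAlgebra

theorem stmt6_general (A : Type*) [CommRing A] (E : Type*) [AddCommGroup E] [Module A E]
    (lam : A) (ω : E →ₗ[A] E →ₗ[A] A)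
    (ν ν' : ℕ) (e : Module.Basis (Fin (ν + ν')) A E)
    (hLiso : ∀ x ∈ Submodule.span A (Set.range fun i : Fin ν => e (Fin.castAdd ν' i)),
      ∀ y ∈ Submodule.span A (Set.range fun i : Fin ν => e (Fin.castAdd ν' i)),
        ω x y = 0)
    (hS : Function.Bijective
      ((RingQuot.mkAlgHom A (symRel A E)).toLinearMap.comp (stilde e).subtype)) :
    Submodule.map
      (((RingQuot.mkAlgHom A (weylRel A lam ω)).toLinearMap.comp
          (stilde e).subtype).comp
        (LinearEquiv.ofBijective
          ((RingQuot.mkAlgHom A (symRel A E)).toLinearMap.comp (stilde e).subtype)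
          hS).symm.toLinearMap)
      ((Ideal.span
          (⇑(RingQuot.mkAlgHom A (symRel A E)) ''
            (⇑(TensorAlgebra.ι A) ''
              (Submodule.span A (Set.range fun i : Fin ν => e (Fin.castAdd ν' i)) :
                Set E)))).restrictScalars A) =
      (Ideal.span
          (⇑(RingQuot.mkAlgHom A (weylRel A lam ω)) ''
            (⇑(TensorAlgebra.ι A) ''
              (Submodule.span A (Set.range fun i : Fin ν => e (Fin.castAdd ν' i)) :
                Set E)))).restrictScalars A := by
  let s : Set (Fin (ν + ν')) := {i | (i : ℕ) < ν}
  have hL : (Set.range fun i : Fin ν => e (Fin.castAdd ν' i)) = e '' s := by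
    ext x
    constructor
    · rintro ⟨i, rfl⟩
      exact ⟨Fin.castAdd ν' i, i.isLt, rfl⟩
    · rintro ⟨j, hj, rfl⟩
      exact ⟨⟨j, hj⟩, rfl⟩
  have hs : IsLowerSet s := fun _ _ hle hlt => lt_of_le_of_lt (α := ℕ) hle hlt
  have hLiso' : ∀ k ∈ s, ∀ j ∈ s, lam * ω (e k) (e j) = 0 := fun k hk j hj => by
    rw [hLiso _ (Submodule.subset_span (hL ▸ ⟨k, hk, rfl⟩))
      _ (Submodule.subset_span (hL ▸ ⟨j, hj, rfl⟩)), mul_zero]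
  rw [hL, ideal_span_mkAlgHom_ι_span, ideal_span_mkAlgHom_ι_span, Set.image_image,
    Set.image_image,
    ideal_span_eq_sortedSpan (c := 0) (by simp [mkAlgHom_symRel_ι_comm]) hs (by simp)
      (adjoin_range_mkAlgHom_ι_basis _ e),
    ideal_span_eq_sortedSpan (fun k j => mkAlgHom_weylRel_ι_comm lam ω (e k) (e j)) hs hLiso'
      (adjoin_range_mkAlgHom_ι_basis _ e)]
  refine map_sortedSpan _ _ _ (fun K hK => ?_) _
  have hmem : eTensor e K ∈ stilde e := Submodule.subset_span ⟨K, hK, rfl⟩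
  simpa [← mkAlgHom_eTensor] using congrArg (fun t : stilde e =>
      RingQuot.mkAlgHom A (weylRel A lam ω) t)
    (LinearEquiv.ofBijective_symm_apply_apply (h := hS) _ (⟨eTensor e K, hmem⟩ : stilde e))

/-- Let `π = μ_W ∘ (μ_S|S̃(E))⁻¹ : S(E) → W(E)`; let `I_L^{(S)}` be the
ideal of `S(E)` generated by `μ_S(L)` and `I_L ⊆ W(E)` the left ideal generated by
`μ_W(L)`.  Then `π(I_L^{(S)}) = I_L`. -/
theorem stmt6 (A : Type*) [CommRing A] (E : Type*) [AddCommGroup E] [Module A E]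
    (lam : A) (ω : E →ₗ[A] E →ₗ[A] A) (halt : ∀ x : E, ω x x = 0)
    (ν ν' : ℕ) (e : Module.Basis (Fin (ν + ν')) A E)
    (hLiso : ∀ x ∈ Submodule.span A (Set.range fun i : Fin ν => e (Fin.castAdd ν' i)),
      ∀ y ∈ Submodule.span A (Set.range fun i : Fin ν => e (Fin.castAdd ν' i)),
        ω x y = 0)
    (hL'iso : ∀ x ∈ Submodule.span A (Set.range fun i : Fin ν' => e (Fin.natAdd ν i)),
      ∀ y ∈ Submodule.span A (Set.range fun i : Fin ν' => e (Fin.natAdd ν i)),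
        ω x y = 0)
    (hS : Function.Bijective
      ((RingQuot.mkAlgHom A (symRel A E)).toLinearMap.comp (stilde e).subtype)) :
    Submodule.map
      (((RingQuot.mkAlgHom A (weylRel A lam ω)).toLinearMap.comp
          (stilde e).subtype).comp
        (LinearEquiv.ofBijective
          ((RingQuot.mkAlgHom A (symRel A E)).toLinearMap.comp (stilde e).subtype)
          hS).symm.toLinearMap)
      ((Ideal.span
          (⇑(RingQuot.mkAlgHom A (symRel A E)) ''
            (⇑(TensorAlgebra.ι A) ''
              (Submodule.span A (Set.range fun i : Fin ν => e (Fin.castAdd ν' i)) :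
                Set E)))).restrictScalars A) =
      (Ideal.span
          (⇑(RingQuot.mkAlgHom A (weylRel A lam ω)) ''
            (⇑(TensorAlgebra.ι A) ''
              (Submodule.span A (Set.range fun i : Fin ν => e (Fin.castAdd ν' i)) :
                Set E)))).restrictScalars A :=
  stmt6_general A E lam ω ν ν' e hLiso hS
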